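/- Define the matrix F_k(x_1,y_1,…,x_k,y_k) = A^{x_1} B^{y_1} ⋯ A^{x_k} B^{y_k} with entries polynomials in the exponents, where A^x = [[1, 2x],[0,1]] and B^y = [[1,0],[-2y,1]] for variables x, y. Writing F_k = [[f_k, h_k],[t_k, g_k]], the polynomials satisfy deg f_k = 2k, deg h_k = deg t_k = 2k−1, deg g_k = 2k−2 (for k ≥ 1), and the leading term of f_k is (−1)^k 4^k x_1 y_1 ⋯ x_k y_k. -/
import Mathlib

open Matrix MvPolynomial

/-- F_k = A^{x_1}B^{y_1}⋯A^{x_k}B^{y_k} as a matrix of polynomials in the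
2k variables x_i = X (i,0), y_i = X (i,1). -/
noncomputable def Fmat (k : ℕ) : Matrix (Fin 2) (Fin 2) (MvPolynomial (Fin k × Fin 2) ℤ) :=
  (List.ofFn (fun i : Fin k =>
    (!![1, 2 * X (i, 0); 0, 1] : Matrix (Fin 2) (Fin 2) (MvPolynomial (Fin k × Fin 2) ℤ)) *
      !![1, 0; -2 * X (i, 1), 1])).prod

namespace Stmt9Aux

variable {σ : Type*}

lemma Cm4 : (C (-4 : ℤ) : MvPolynomial σ ℤ) = -4 := by simp
lemma Cm2 : (C (-2 : ℤ) : MvPolynomial σ ℤ) = -2 := by simp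
lemma C2' : (C (2 : ℤ) : MvPolynomial σ ℤ) = 2 := by simp

lemma tot_X_mul (s : σ) {p : MvPolynomial σ ℤ} (hp : p ≠ 0) :
    (X s * p).totalDegree = p.totalDegree + 1 := by
  refine le_antisymm ((totalDegree_mul _ _).trans_eq (by rw [totalDegree_X, add_comm])) ?_
  obtain ⟨m, hm, hdeg⟩ := p.support.exists_mem_eq_sup (support_nonempty.mpr hp)
      (fun m => m.sum fun _ e => e)
  have hmem : Finsupp.single s 1 + m ∈ (X s * p).support := by
    rw [MvPolynomial.mem_support_iff, coeff_X_mul]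
    exact MvPolynomial.mem_support_iff.mp hm
  have h2 := le_totalDegree hmem
  rwa [Finsupp.sum_add_index' (fun _ => rfl) (fun _ _ _ => rfl),
    Finsupp.sum_single_index rfl, ← hdeg, add_comm 1] at h2

lemma tot_C_mul (c : ℤ) (hc : c ≠ 0) (p : MvPolynomial σ ℤ) :
    (C c * p).totalDegree = p.totalDegree := by
  have h : (C c * p).support = p.support := by
    ext m
    rw [MvPolynomial.mem_support_iff, MvPolynomial.mem_support_iff, coeff_C_mul]
    simp [hc]
  rw [totalDegree, totalDegree, h]

lemma totm4 (a b : σ) {p : MvPolynomial σ ℤ} (hp : p ≠ 0) :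
    ((-4) * (X a * (X b * p)) : MvPolynomial σ ℤ).totalDegree = p.totalDegree + 2 := by
  rw [← Cm4, tot_C_mul _ (by norm_num), tot_X_mul _ (mul_ne_zero (X_ne_zero _) hp),
    tot_X_mul _ hp]

lemma tot2X (a : σ) {p : MvPolynomial σ ℤ} (hp : p ≠ 0) :
    ((2) * (X a * p) : MvPolynomial σ ℤ).totalDegree = p.totalDegree + 1 := by
  rw [← C2', tot_C_mul _ (by norm_num), tot_X_mul _ hp]

lemma totm2X (a : σ) {p : MvPolynomial σ ℤ} (hp : p ≠ 0) :
    ((-2) * (X a * p) : MvPolynomial σ ℤ).totalDegree = p.totalDegree + 1 := by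
  rw [← Cm2, tot_C_mul _ (by norm_num), tot_X_mul _ hp]

lemma lem2X (a : σ) (p : MvPolynomial σ ℤ) :
    ((-2) * (X a * p) : MvPolynomial σ ℤ).totalDegree ≤ p.totalDegree + 1 := by
  calc ((-2 : MvPolynomial σ ℤ) * (X a * p)).totalDegree
      ≤ (-2 : MvPolynomial σ ℤ).totalDegree + (X a * p).totalDegree := totalDegree_mul _ _
    _ ≤ (-2 : MvPolynomial σ ℤ).totalDegree
        + ((X a : MvPolynomial σ ℤ).totalDegree + p.totalDegree) := by
        gcongr; exact totalDegree_mul _ _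
    _ = p.totalDegree + 1 := by rw [← Cm2, totalDegree_C, totalDegree_X]; ring

lemma ne_of_deg {p : MvPolynomial σ ℤ} {n : ℕ} (h : p.totalDegree = n) (hn : 0 < n) :
    p ≠ 0 := by
  intro h0
  rw [h0, totalDegree_zero] at h
  omega

noncomputable def AB (i : ℕ) : Matrix (Fin 2) (Fin 2) (MvPolynomial (ℕ × Fin 2) ℤ) :=
  !![1 - 4 * X (i,0) * X (i,1), 2 * X (i,0); -2 * X (i,1), 1]

noncomputable def G : ℕ → Matrix (Fin 2) (Fin 2) (MvPolynomial (ℕ × Fin 2) ℤ)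
  | 0 => 1
  | k+1 => G k * AB k

lemma G_succ_00 (k : ℕ) : G (k+1) 0 0
    = G k 0 0 + ((-4) * (X (k,0) * (X (k,1) * G k 0 0)) + (-2) * (X (k,1) * G k 0 1)) := by
  show (G k * AB k) 0 0 = _
  rw [Matrix.mul_apply, Fin.sum_univ_two]
  simp [AB]
  ring

lemma G_succ_01 (k : ℕ) : G (k+1) 0 1
    = 2 * (X (k,0) * G k 0 0) + G k 0 1 := by
  show (G k * AB k) 0 1 = _
  rw [Matrix.mul_apply, Fin.sum_univ_two]
  simp [AB]
  ring

lemma G_succ_10 (k : ℕ) : G (k+1) 1 0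
    = G k 1 0 + ((-4) * (X (k,0) * (X (k,1) * G k 1 0)) + (-2) * (X (k,1) * G k 1 1)) := by
  show (G k * AB k) 1 0 = _
  rw [Matrix.mul_apply, Fin.sum_univ_two]
  simp [AB]
  ring

lemma G_succ_11 (k : ℕ) : G (k+1) 1 1
    = 2 * (X (k,0) * G k 1 0) + G k 1 1 := by
  show (G k * AB k) 1 1 = _
  rw [Matrix.mul_apply, Fin.sum_univ_two]
  simp [AB]
  ring

noncomputable def D (k : ℕ) : (ℕ × Fin 2) →₀ ℕ :=
  ∑ i ∈ Finset.range k,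
    (Finsupp.single ((i : ℕ), (0 : Fin 2)) 1 + Finsupp.single ((i : ℕ), (1 : Fin 2)) 1)

lemma D_succ (k : ℕ) : D (k+1)
    = D k + (Finsupp.single ((k : ℕ), (0 : Fin 2)) 1
        + Finsupp.single ((k : ℕ), (1 : Fin 2)) 1) :=
  Finset.sum_range_succ _ k

lemma wD (k : ℕ) : ∑ i ∈ (D k).support, D k i = 2 * k := by
  have h : (D k).sum (fun _ e => e) = 2 * k := by
    induction k with
    | zero => simp [D]
    | succ n ih =>
      rw [D_succ, Finsupp.sum_add_index' (fun _ => rfl) (fun _ _ _ => rfl),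
        Finsupp.sum_add_index' (fun _ => rfl) (fun _ _ _ => rfl),
        Finsupp.sum_single_index rfl, Finsupp.sum_single_index rfl, ih]
      omega
  exact h

lemma main : ∀ k, 1 ≤ k →
    (G k 0 0).totalDegree = 2*k ∧ (G k 0 1).totalDegree = 2*k-1 ∧
    (G k 1 0).totalDegree = 2*k-1 ∧ (G k 1 1).totalDegree = 2*k-2 ∧
    G k 1 1 ≠ 0 ∧ coeff (D k) (G k 0 0) = (-1)^k * 4^k := by
  intro k hk
  induction k with
  | zero => omega
  | succ k ih =>
    rcases Nat.eq_zero_or_pos k with rfl | hk1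
    · -- base case k = 1
      have e00 : G 0 0 0 = 1 := by simp [G, Matrix.one_apply]
      have e01 : G 0 0 1 = 0 := by simp [G, Matrix.one_apply]
      have e10 : G 0 1 0 = 0 := by simp [G, Matrix.one_apply]
      have e11 : G 0 1 1 = 1 := by simp [G, Matrix.one_apply]
      have f1 : G 1 0 0 = 1 + (-4) * (X ((0:ℕ),(0:Fin 2)) * (X (0,1) * 1)) := by
        rw [G_succ_00, e00, e01]; ring
      have h1 : G 1 0 1 = 2 * (X ((0:ℕ),(0:Fin 2)) * 1) := by
        rw [G_succ_01, e00, e01]; ring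
      have t1 : G 1 1 0 = (-2) * (X ((0:ℕ),(1:Fin 2)) * 1) := by
        rw [G_succ_10, e10, e11]; ring
      have g1 : G 1 1 1 = 1 := by
        rw [G_succ_11, e10, e11]; ring
      have hDf : ((-4) * (X ((0:ℕ),(0:Fin 2)) * (X (0,1) * 1))
          : MvPolynomial (ℕ × Fin 2) ℤ).totalDegree = 2 := by
        rw [totm4 _ _ one_ne_zero, totalDegree_one]
      refine ⟨?_, ?_, ?_, ?_, ?_, ?_⟩
      · rw [f1, totalDegree_add_eq_right_of_totalDegree_lt (by rw [hDf, totalDegree_one]; omega),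
          hDf]
      · rw [h1, tot2X _ one_ne_zero, totalDegree_one]
      · rw [t1, totm2X _ one_ne_zero, totalDegree_one]
      · rw [g1, totalDegree_one]
      · rw [g1]; exact one_ne_zero
      · have hD1 : D 1 = Finsupp.single ((0:ℕ),(0:Fin 2)) 1
            + Finsupp.single ((0:ℕ),(1:Fin 2)) 1 := by
          rw [show D 1 = D 0 + _ from D_succ 0, show D 0 = 0 by simp [D], zero_add]
        rw [f1, MvPolynomial.coeff_add, ← Cm4, coeff_C_mul, hD1, coeff_X_mul,
          show (Finsupp.single ((0:ℕ),(1:Fin 2)) 1)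
            = Finsupp.single ((0:ℕ),(1:Fin 2)) 1 + 0 from (add_zero _).symm,
          coeff_X_mul]
        have hz : MvPolynomial.coeff (D 1) (1 : MvPolynomial (ℕ × Fin 2) ℤ) = 0 := by
          apply coeff_eq_zero_of_totalDegree_lt
          rw [wD, totalDegree_one]; omega
        rw [add_zero, ← hD1, hz]
        simp
    · -- inductive step, k ≥ 1
      obtain ⟨df, dh, dt, dg, hg, hc⟩ := ih hk1
      have hf : G k 0 0 ≠ 0 := ne_of_deg df (by omega)
      have hh : G k 0 1 ≠ 0 := ne_of_deg dh (by omega)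
      have ht : G k 1 0 ≠ 0 := ne_of_deg dt (by omega)
      -- f entry
      have hA : ((-4) * (X ((k:ℕ),(0:Fin 2)) * (X (k,1) * G k 0 0))).totalDegree
          = 2*k+2 := by rw [totm4 _ _ hf, df]
      have hB : ((-2) * (X ((k:ℕ),(1:Fin 2)) * G k 0 1)).totalDegree ≤ 2*k :=
        (lem2X _ _).trans (by omega)
      have hin : ((-4) * (X ((k:ℕ),(0:Fin 2)) * (X (k,1) * G k 0 0))
          + (-2) * (X ((k:ℕ),(1:Fin 2)) * G k 0 1)).totalDegree = 2*k+2 := by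
        rw [totalDegree_add_eq_left_of_totalDegree_lt (by rw [hA]; omega), hA]
      have df' : (G (k+1) 0 0).totalDegree = 2*(k+1) := by
        rw [G_succ_00,
          totalDegree_add_eq_right_of_totalDegree_lt (by rw [hin, df]; omega), hin]
        ring
      -- h entry
      have dh' : (G (k+1) 0 1).totalDegree = 2*(k+1)-1 := by
        rw [G_succ_01,
          totalDegree_add_eq_left_of_totalDegree_lt (by rw [tot2X _ hf, df, dh]; omega),
          tot2X _ hf, df]
        omega
      -- t entry
      have hA' : ((-4) * (X ((k:ℕ),(0:Fin 2)) * (X (k,1) * G k 1 0))).totalDegree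
          = 2*k+1 := by rw [totm4 _ _ ht, dt]; omega
      have hB' : ((-2) * (X ((k:ℕ),(1:Fin 2)) * G k 1 1)).totalDegree ≤ 2*k-1 :=
        (lem2X _ _).trans (by omega)
      have hin' : ((-4) * (X ((k:ℕ),(0:Fin 2)) * (X (k,1) * G k 1 0))
          + (-2) * (X ((k:ℕ),(1:Fin 2)) * G k 1 1)).totalDegree = 2*k+1 := by
        rw [totalDegree_add_eq_left_of_totalDegree_lt (by rw [hA']; omega), hA']
      have dt' : (G (k+1) 1 0).totalDegree = 2*(k+1)-1 := by
        rw [G_succ_10,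
          totalDegree_add_eq_right_of_totalDegree_lt (by rw [hin', dt]; omega), hin']
        omega
      -- g entry
      have dg' : (G (k+1) 1 1).totalDegree = 2*(k+1)-2 := by
        rw [G_succ_11,
          totalDegree_add_eq_left_of_totalDegree_lt (by rw [tot2X _ ht, dt]; omega),
          tot2X _ ht, dt]
        omega
      refine ⟨df', dh', dt', dg', ne_of_deg dg' (by omega), ?_⟩
      -- leading coefficient
      have hD : D (k+1) = Finsupp.single ((k:ℕ),(0:Fin 2)) 1
          + (Finsupp.single ((k:ℕ),(1:Fin 2)) 1 + D k) := by
        rw [D_succ]; abel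
      have t1 : MvPolynomial.coeff (D (k+1)) (G k 0 0) = 0 := by
        apply coeff_eq_zero_of_totalDegree_lt
        rw [wD, df]; omega
      have t3 : MvPolynomial.coeff (D (k+1))
          ((-2) * (X ((k:ℕ),(1:Fin 2)) * G k 0 1)) = 0 := by
        apply coeff_eq_zero_of_totalDegree_lt
        rw [wD]
        have := (lem2X ((k:ℕ),(1:Fin 2)) (G k 0 1)).trans (by omega : (G k 0 1).totalDegree + 1 ≤ 2*k)
        omega
      have t2 : MvPolynomial.coeff (D (k+1))
          ((-4) * (X ((k:ℕ),(0:Fin 2)) * (X (k,1) * G k 0 0)))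
          = -4 * MvPolynomial.coeff (D k) (G k 0 0) := by
        rw [← Cm4, coeff_C_mul, hD, coeff_X_mul, coeff_X_mul]
      rw [G_succ_00, MvPolynomial.coeff_add, MvPolynomial.coeff_add, t1, t2, t3, hc]
      ring

abbrev emb (k : ℕ) : Fin k × Fin 2 → ℕ × Fin 2 := fun v => ((v.1 : ℕ), v.2)

lemma emb_inj (k : ℕ) : Function.Injective (emb k) := by
  intro a b h
  cases a; cases b
  simpa [emb, Prod.ext_iff, Fin.val_inj] using h

lemma ofFn_AB_prod : ∀ k, (List.ofFn (fun i : Fin k => AB (i : ℕ))).prod = G k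
  | 0 => by simp [G]
  | k+1 => by
    rw [List.ofFn_succ', List.prod_concat]
    have h1 : (fun i : Fin (k+1) => AB (i : ℕ)) ∘ Fin.castSucc
        = fun i : Fin k => AB (i : ℕ) := by
      funext i; simp
    rw [show (List.ofFn fun i : Fin k => AB ((Fin.castSucc i : Fin (k+1)) : ℕ))
        = List.ofFn fun i : Fin k => AB (i : ℕ) by simp]
    rw [ofFn_AB_prod k]
    rfl

lemma rename_Fmat (k : ℕ) (i j : Fin 2) :
    rename (emb k) (Fmat k i j) = G k i j := by
  have hm : (AlgHom.mapMatrix (rename (emb k)) :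
      Matrix (Fin 2) (Fin 2) (MvPolynomial (Fin k × Fin 2) ℤ) →ₐ[ℤ]
      Matrix (Fin 2) (Fin 2) (MvPolynomial (ℕ × Fin 2) ℤ)) (Fmat k) = G k := by
    rw [Fmat, map_list_prod, List.map_ofFn, ← ofFn_AB_prod k]
    congr 1
    rw [List.ofFn_inj]
    funext a
    ext x y
    fin_cases x <;> fin_cases y <;>
      simp [AB, AlgHom.mapMatrix_apply, Matrix.map_apply, Matrix.mul_apply,
        Fin.sum_univ_two, emb, map_ofNat] <;> ring_nf
  have h2 := congrFun (congrFun hm i) j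
  simpa [AlgHom.mapMatrix_apply, Matrix.map_apply] using h2

lemma td_rename {k : ℕ} (p : MvPolynomial (Fin k × Fin 2) ℤ) :
    (rename (emb k) p).totalDegree = p.totalDegree := by
  classical
  rw [totalDegree, totalDegree,
    MvPolynomial.support_rename_of_injective (emb_inj k), Finset.sup_image]
  congr 1
  funext d
  exact Finsupp.sum_mapDomain_index (h := fun _ e => e) (fun _ => rfl) (fun _ _ _ => rfl)

lemma mapDomain_sum (k : ℕ) :
    Finsupp.mapDomain (emb k) (∑ v : Fin k × Fin 2, Finsupp.single v 1) = D k := by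
  rw [Finsupp.mapDomain_finset_sum]
  simp only [Finsupp.mapDomain_single]
  rw [Fintype.sum_prod_type]
  rw [D, ← Fin.sum_univ_eq_sum_range]
  refine Finset.sum_congr rfl fun i _ => ?_
  rw [Fin.sum_univ_two]

end Stmt9Aux

/-- Degrees of the entries f_k, h_k, t_k, g_k of F_k, and the leading term of f_k,
which is (−1)^k 4^k x_1 y_1 ⋯ x_k y_k. -/
theorem stmt_9 (k : ℕ) (hk : 1 ≤ k) :
    (Fmat k 0 0).totalDegree = 2 * k ∧
    (Fmat k 0 1).totalDegree = 2 * k - 1 ∧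
    (Fmat k 1 0).totalDegree = 2 * k - 1 ∧
    (Fmat k 1 1).totalDegree = 2 * k - 2 ∧
    MvPolynomial.coeff (∑ v : Fin k × Fin 2, Finsupp.single v 1) (Fmat k 0 0)
      = (-1) ^ k * 4 ^ k := by
  obtain ⟨df, dh, dt, dg, _, hc⟩ := Stmt9Aux.main k hk
  have e := Stmt9Aux.rename_Fmat k
  have td : ∀ i j : Fin 2, (Fmat k i j).totalDegree = (Stmt9Aux.G k i j).totalDegree := by
    intro i j
    rw [← e i j, Stmt9Aux.td_rename]
  refine ⟨by rw [td 0 0, df], by rw [td 0 1, dh], by rw [td 1 0, dt], by rw [td 1 1, dg], ?_⟩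
  have hco := coeff_rename_mapDomain (Stmt9Aux.emb k) (Stmt9Aux.emb_inj k) (Fmat k 0 0)
      (∑ v : Fin k × Fin 2, Finsupp.single v 1)
  rw [Stmt9Aux.mapDomain_sum, e 0 0] at hco
  rw [← hco, hc]
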